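/- For every three-qubit pure state ψ, the trace identity Tr(ρ_AB · ρ̃_AB) + Tr(ρ_AS · ρ̃_AS) = 4·det ρ_A holds, where ρ̃ denotes the spin flip of the corresponding reduced density matrix; equivalently, the sum of these two (real, nonnegative) traces equals the squared concurrence C_{A(BS)}² of ψ across the A|(BS) cut. -/

import Mathlib

open Matrix Complex Kronecker Finset
open scoped ComplexOrder

noncomputable section

abbrev TwoQubitMat := Matrix (Fin 2 × Fin 2) (Fin 2 × Fin 2) ℂ

def sigmaY : Matrix (Fin 2) (Fin 2) ℂ := !![0, -Complex.I; Complex.I, 0]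

def spinFlip (ρ : TwoQubitMat) : TwoQubitMat :=
  (sigmaY ⊗ₖ sigmaY) * ρ.map (starRingEnd ℂ) * (sigmaY ⊗ₖ sigmaY)

def matSqrt {m : Type*} [Fintype m] [DecidableEq m] (M : Matrix m m ℂ) : Matrix m m ℂ :=
  open scoped Classical in
  if h : M.PosSemidef then
    (h.1.eigenvectorUnitary : Matrix m m ℂ) *
      diagonal (RCLike.ofReal ∘ (Real.sqrt ∘ h.1.eigenvalues)) *
      (star h.1.eigenvectorUnitary : Matrix m m ℂ) else 0

def Rmat (ρ : TwoQubitMat) : TwoQubitMat :=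
  matSqrt (matSqrt ρ * spinFlip ρ * matSqrt ρ)

def CoA (ρ : TwoQubitMat) : ℝ := (Rmat ρ).trace.re

def lmin2 (M : Matrix (Fin 2) (Fin 2) ℂ) : ℝ :=
  if h : M.IsHermitian then min (h.eigenvalues 0) (h.eigenvalues 1) else 0

def maxEig4 (M : TwoQubitMat) : ℝ :=
  if h : M.IsHermitian then Finset.univ.sup' Finset.univ_nonempty h.eigenvalues else 0

def Conc (ρ : TwoQubitMat) : ℝ := max 0 (2 * maxEig4 (Rmat ρ) - (Rmat ρ).trace.re)

def eigMultiset (M : TwoQubitMat) : Multiset ℝ :=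
  if h : M.IsHermitian then Finset.univ.val.map h.eigenvalues else 0

def rhoAB (ψ : Fin 2 → Fin 2 → Fin 2 → ℂ) : TwoQubitMat :=
  fun p q => ∑ l, ψ p.1 p.2 l * (starRingEnd ℂ) (ψ q.1 q.2 l)

def rhoAS (ψ : Fin 2 → Fin 2 → Fin 2 → ℂ) : TwoQubitMat :=
  fun p q => ∑ j, ψ p.1 j p.2 * (starRingEnd ℂ) (ψ q.1 j q.2)

def rhoA (ψ : Fin 2 → Fin 2 → Fin 2 → ℂ) : Matrix (Fin 2) (Fin 2) ℂ :=
  fun i i' => ∑ j, ∑ l, ψ i j l * (starRingEnd ℂ) (ψ i' j l)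


/-!
If `ρ = X * Xᴴ`, cyclicity of the trace gives `Tr(ρ ρ̃) = Tr(G Gᴴ)` for the symmetric
preconcurrence matrix `G = Xᵀ (σy ⊗ σy) X`, a sum of squared moduli; hence these traces are
real and nonnegative. For `ρ_AB` and `ρ_AS`, in terms of the 2 × 4 coefficient matrix of `ψ`
across the cut A|BS, the diagonal entries of `G` are, up to sign, twice the 2 × 2 minors on
columns differing in one qubit, and the off-diagonal one is the sum, resp. the difference, of
the two minors on columns differing in both. So the identity is the Cauchy–Binet expansion of
`det ρ_A` combined with the parallelogram law.
-/

lemma sigmaY_conjTranspose : sigmaYᴴ = sigmaY := by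
  ext i j
  fin_cases i <;> fin_cases j <;> simp [sigmaY]

lemma kronecker_sigmaY_conjTranspose : (sigmaY ⊗ₖ sigmaY)ᴴ = sigmaY ⊗ₖ sigmaY := by
  rw [conjTranspose_kronecker, sigmaY_conjTranspose]

section

variable {n : Type*}

def preconcurrenceMatrix (X : Matrix (Fin 2 × Fin 2) n ℂ) : Matrix n n ℂ :=
  Xᵀ * (sigmaY ⊗ₖ sigmaY) * X

lemma preconcurrenceMatrix_apply (X : Matrix (Fin 2 × Fin 2) n ℂ) (a b : n) :
    preconcurrenceMatrix X a b = X (0, 1) a * X (1, 0) b + X (1, 0) a * X (0, 1) b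
      - X (0, 0) a * X (1, 1) b - X (1, 1) a * X (0, 0) b := by
  simp only [preconcurrenceMatrix, sigmaY, mul_apply, transpose_apply, kroneckerMap_apply,
    of_apply, cons_val', cons_val_fin_one, Fintype.sum_prod_type, Fin.sum_univ_two, cons_val_zero,
    cons_val_one, mul_zero, zero_add, mul_neg, add_zero, zero_mul, I_mul_I, mul_one, neg_mul,
    neg_zero, neg_neg]
  ring

variable [Fintype n]

lemma spinFlip_self_mul_conjTranspose (X : Matrix (Fin 2 × Fin 2) n ℂ) :
    spinFlip (X * Xᴴ) = (sigmaY ⊗ₖ sigmaY) * Xᴴᵀ * Xᵀ * (sigmaY ⊗ₖ sigmaY) := by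
  have hX : X.map (starRingEnd ℂ) = Xᴴᵀ := by ext; simp
  have hXH : Xᴴ.map (starRingEnd ℂ) = Xᵀ := by ext; simp
  rw [spinFlip, Matrix.map_mul, hX, hXH, Matrix.mul_assoc _ Xᴴᵀ]

lemma trace_mul_spinFlip_self_mul_conjTranspose (X : Matrix (Fin 2 × Fin 2) n ℂ) :
    (X * Xᴴ * spinFlip (X * Xᴴ)).trace =
      (preconcurrenceMatrix X * (preconcurrenceMatrix X)ᴴ).trace := by
  rw [spinFlip_self_mul_conjTranspose, preconcurrenceMatrix]
  set S := sigmaY ⊗ₖ sigmaY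
  have hS : Sᴴ = S := kronecker_sigmaY_conjTranspose
  rw [conjTranspose_mul, conjTranspose_mul, hS, conjTranspose_transpose_eq_transpose_conjTranspose,
    show X * Xᴴ * (S * Xᴴᵀ * Xᵀ * S) = (X * Xᴴ * S * Xᴴᵀ) * (Xᵀ * S) by
      simp only [Matrix.mul_assoc],
    trace_mul_comm]
  simp only [Matrix.mul_assoc]

lemma trace_mul_spinFlip_self_mul_conjTranspose_nonneg (X : Matrix (Fin 2 × Fin 2) n ℂ) :
    0 ≤ (X * Xᴴ * spinFlip (X * Xᴴ)).trace := by
  rw [trace_mul_spinFlip_self_mul_conjTranspose]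
  exact (posSemidef_self_mul_conjTranspose _).trace_nonneg

end

lemma rhoAB_eq_self_mul_conjTranspose (ψ : Fin 2 → Fin 2 → Fin 2 → ℂ) :
    rhoAB ψ = of (fun p l => ψ p.1 p.2 l) * (of fun p l => ψ p.1 p.2 l)ᴴ := by
  ext p q
  simp [rhoAB, mul_apply]

lemma rhoAS_eq_self_mul_conjTranspose (ψ : Fin 2 → Fin 2 → Fin 2 → ℂ) :
    rhoAS ψ = of (fun p j => ψ p.1 j p.2) * (of fun p j => ψ p.1 j p.2)ᴴ := by
  ext p q
  simp [rhoAS, mul_apply]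

theorem trace_spinflip_identity_general (ψ : Fin 2 → Fin 2 → Fin 2 → ℂ) :
    0 ≤ ((rhoAB ψ) * spinFlip (rhoAB ψ)).trace.re ∧
    0 ≤ ((rhoAS ψ) * spinFlip (rhoAS ψ)).trace.re ∧
    ((rhoAB ψ) * spinFlip (rhoAB ψ)).trace + ((rhoAS ψ) * spinFlip (rhoAS ψ)).trace =
      4 * (rhoA ψ).det := by
  rw [rhoAB_eq_self_mul_conjTranspose, rhoAS_eq_self_mul_conjTranspose]
  refine ⟨(Complex.nonneg_iff.mp (trace_mul_spinFlip_self_mul_conjTranspose_nonneg _)).1,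
    (Complex.nonneg_iff.mp (trace_mul_spinFlip_self_mul_conjTranspose_nonneg _)).1, ?_⟩
  rw [trace_mul_spinFlip_self_mul_conjTranspose, trace_mul_spinFlip_self_mul_conjTranspose]
  simp only [trace, Matrix.diag, mul_apply, conjTranspose_apply, preconcurrenceMatrix_apply,
    of_apply, det_fin_two, rhoA, Fin.sum_univ_two, Complex.star_def, map_add, map_sub, map_mul]
  ring

theorem trace_spinflip_identity (ψ : Fin 2 → Fin 2 → Fin 2 → ℂ)
    (hψ : ∑ i, ∑ j, ∑ l, Complex.normSq (ψ i j l) = 1) :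
    0 ≤ ((rhoAB ψ) * spinFlip (rhoAB ψ)).trace.re ∧
    0 ≤ ((rhoAS ψ) * spinFlip (rhoAS ψ)).trace.re ∧
    ((rhoAB ψ) * spinFlip (rhoAB ψ)).trace + ((rhoAS ψ) * spinFlip (rhoAS ψ)).trace =
      4 * (rhoA ψ).det :=
  trace_spinflip_identity_general ψ
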